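/- arXiv:1810.09096 — 5 statements merged into one kernel-verified Lean document; each statement's English description precedes it below -/
import Mathlib

section
/- Define (p*, z*) as follows: if min{(a + β)·P_max + b, (a + β)·P_min + b} ≥ 0 set (p*, z*) = (0, 0); otherwise set z* = 1 and p* = P_max if β ≤ −a, p* = P_min if β > −a. Then (p*, z*) is feasible for the individual-unit subproblem and attains its optimal value L(β). -/
/-- Define `(p*, z*)` by: if `min{(a+β)·P_max + b, (a+β)·P_min + b} ≥ 0`
set `(p*, z*) = (0, 0)`; otherwise `z* = 1` and `p* = P_max` if `β ≤ -a`,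
`p* = P_min` if `β > -a`.  Then `(p*, z*)` is feasible for the individual-unit
subproblem and its objective value is the least feasible value `L(β)`. -/
theorem iUC_optimal_solution (a b β Pmin Pmax : ℝ) (hPmin : 0 < Pmin) (hP : Pmin ≤ Pmax) :
    let zstar : ℝ := if 0 ≤ min ((a + β) * Pmax + b) ((a + β) * Pmin + b) then 0 else 1
    let pstar : ℝ := if 0 ≤ min ((a + β) * Pmax + b) ((a + β) * Pmin + b) then 0
      else if β ≤ -a then Pmax else Pmin
    (zstar = 0 ∨ zstar = 1) ∧ zstar * Pmin ≤ pstar ∧ pstar ≤ zstar * Pmax ∧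
      IsLeast {v : ℝ | ∃ p z : ℝ, (z = 0 ∨ z = 1) ∧ z * Pmin ≤ p ∧ p ≤ z * Pmax ∧
          v = z * (a * p + b) + β * p}
        (zstar * (a * pstar + b) + β * pstar) := by
  intro zstar pstar
  by_cases h : 0 ≤ min ((a + β) * Pmax + b) ((a + β) * Pmin + b)
  · have hz : zstar = 0 := if_pos h
    have hp : pstar = 0 := if_pos h
    have h1 : 0 ≤ (a + β) * Pmax + b := le_trans h (min_le_left _ _)
    have h2 : 0 ≤ (a + β) * Pmin + b := le_trans h (min_le_right _ _)
    rw [hz, hp]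
    refine ⟨Or.inl rfl, by norm_num, by norm_num, ⟨⟨0, 0, Or.inl rfl, by norm_num, by norm_num, by ring⟩, ?_⟩⟩
    rintro v ⟨p, z, hz01, hl, hu, hv⟩
    simp only [zero_mul, mul_zero, add_zero, zero_add]
    rcases hz01 with rfl | rfl
    · simp only [zero_mul] at hl hu
      have : p = 0 := le_antisymm hu hl
      simp [hv, this]
    · simp only [one_mul] at hl hu
      have hv' : v = (a + β) * p + b := by rw [hv]; ring
      rcases le_or_gt 0 (a + β) with hab | hab
      · nlinarith [mul_le_mul_of_nonneg_left hl hab]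
      · nlinarith [mul_le_mul_of_nonpos_left hu hab.le]
  · have hz : zstar = 1 := if_neg h
    have hp : pstar = if β ≤ -a then Pmax else Pmin := if_neg h
    push_neg at h
    have hlt := min_lt_iff.mp h
    rw [hz, hp]
    have hPmax : 0 < Pmax := lt_of_lt_of_le hPmin hP
    by_cases hb : β ≤ -a
    · have hab : a + β ≤ 0 := by linarith
      rw [if_pos hb]
      refine ⟨Or.inr rfl, by linarith [one_mul Pmin], by linarith [one_mul Pmax],
        ⟨⟨Pmax, 1, Or.inr rfl, by linarith [one_mul Pmin], le_of_eq (one_mul Pmax).symm, rfl⟩, ?_⟩⟩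
      rintro v ⟨p, z, hz01, hl, hu, hv⟩
      rcases hz01 with rfl | rfl
      · simp only [zero_mul] at hl hu
        have : p = 0 := le_antisymm hu hl
        subst this
        have : v = 0 := by rw [hv]; ring
        rcases hlt with h1 | h1 <;> nlinarith
      · simp only [one_mul] at hl hu
        nlinarith [mul_le_mul_of_nonpos_left hu hab]
    · have hab : 0 < a + β := by push_neg at hb; linarith
      rw [if_neg hb]
      refine ⟨Or.inr rfl, le_of_eq (one_mul Pmin), by linarith [one_mul Pmax],
        ⟨⟨Pmin, 1, Or.inr rfl, le_of_eq (one_mul Pmin), by linarith [one_mul Pmax], rfl⟩, ?_⟩⟩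
      rintro v ⟨p, z, hz01, hl, hu, hv⟩
      rcases hz01 with rfl | rfl
      · simp only [zero_mul] at hl hu
        have : p = 0 := le_antisymm hu hl
        subst this
        have : v = 0 := by rw [hv]; ring
        rcases hlt with h1 | h1 <;> nlinarith
      · simp only [one_mul] at hl hu
        nlinarith [mul_le_mul_of_nonneg_left hl hab.le]
end

section
/- The optimal value of the individual-unit subproblem satisfies L(β) = 0 if and only if β ≥ β⁰. -/
/-- With `β⁰ = max{-a - b/P_max, -a - b/P_min}`, the optimal value of the
individual-unit subproblem equals `0` (i.e. `0` is the least feasible objective value)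
if and only if `β ≥ β⁰`. -/
theorem iUC_zero_value_iff (a b β Pmin Pmax : ℝ) (hPmin : 0 < Pmin) (hP : Pmin ≤ Pmax) :
    IsLeast {v : ℝ | ∃ p z : ℝ, (z = 0 ∨ z = 1) ∧ z * Pmin ≤ p ∧ p ≤ z * Pmax ∧
        v = z * (a * p + b) + β * p} 0 ↔
      max (-a - b / Pmax) (-a - b / Pmin) ≤ β := by
  have hPmax : 0 < Pmax := lt_of_lt_of_le hPmin hP
  have hbmax : b / Pmax * Pmax = b := div_mul_cancel₀ b hPmax.ne'
  have hbmin : b / Pmin * Pmin = b := div_mul_cancel₀ b hPmin.ne'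
  have hmem : (0:ℝ) ∈ {v : ℝ | ∃ p z : ℝ, (z = 0 ∨ z = 1) ∧ z * Pmin ≤ p ∧ p ≤ z * Pmax ∧
        v = z * (a * p + b) + β * p} := ⟨0, 0, Or.inl rfl, by simp, by simp, by ring⟩
  constructor
  · rintro ⟨-, hlb⟩
    have h1 : (0:ℝ) ≤ 1 * (a * Pmax + b) + β * Pmax :=
      hlb ⟨Pmax, 1, Or.inr rfl, by linarith, by linarith, rfl⟩
    have h2 : (0:ℝ) ≤ 1 * (a * Pmin + b) + β * Pmin :=
      hlb ⟨Pmin, 1, Or.inr rfl, by linarith, by linarith, rfl⟩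
    rw [max_le_iff]
    constructor
    · nlinarith
    · nlinarith
  · intro hβ
    rw [max_le_iff] at hβ
    obtain ⟨hA, hB⟩ := hβ
    have hA' : 0 ≤ (a + β) * Pmax + b := by nlinarith
    have hB' : 0 ≤ (a + β) * Pmin + b := by nlinarith
    refine ⟨hmem, ?_⟩
    rintro v ⟨p, z, hz | hz, h1, h2, rfl⟩
    · subst hz
      have hp0 : p = 0 := le_antisymm (by simpa using h2) (by simpa using h1)
      simp [hp0]
    · subst hz
      rw [one_mul] at h1 h2 ⊢
      rcases le_or_gt 0 (a + β) with h | h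
      · nlinarith
      · nlinarith
end

section
/- If β < β⁰, then L(β) < 0 and every feasible pair (p, z) of the individual-unit subproblem attaining the optimal value L(β) has z = 1. -/
/-- With `β⁰ = max{-a - b/P_max, -a - b/P_min}`, if `β < β⁰` then the
optimal value `L(β)` of the individual-unit subproblem is negative, and every feasible
pair `(p, z)` attaining the optimal value has `z = 1`. -/
theorem iUC_committed_below_beta0 (a b β Pmin Pmax : ℝ) (hPmin : 0 < Pmin)
    (hP : Pmin ≤ Pmax) (hβ : β < max (-a - b / Pmax) (-a - b / Pmin)) :
    (∃ v : ℝ, IsLeast {v : ℝ | ∃ p z : ℝ, (z = 0 ∨ z = 1) ∧ z * Pmin ≤ p ∧ p ≤ z * Pmax ∧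
        v = z * (a * p + b) + β * p} v ∧ v < 0) ∧
    (∀ p z : ℝ, (z = 0 ∨ z = 1) → z * Pmin ≤ p → p ≤ z * Pmax →
      IsLeast {v : ℝ | ∃ p z : ℝ, (z = 0 ∨ z = 1) ∧ z * Pmin ≤ p ∧ p ≤ z * Pmax ∧
        v = z * (a * p + b) + β * p} (z * (a * p + b) + β * p) → z = 1) := by
  have hPmax : 0 < Pmax := lt_of_lt_of_le hPmin hP
  set c := a + β with hc
  set pstar : ℝ := if c ≤ 0 then Pmax else Pmin with hpstar
  have hps1 : Pmin ≤ pstar := by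
    simp only [hpstar]; split <;> [exact hP; exact le_rfl]
  have hps2 : pstar ≤ Pmax := by
    simp only [hpstar]; split <;> [exact le_rfl; exact hP]
  set vstar : ℝ := c * pstar + b with hv
  -- vstar < 0
  have hvneg : vstar < 0 := by
    rcases max_cases (-a - b / Pmax) (-a - b / Pmin) with ⟨hm, _⟩ | ⟨hm, _⟩ <;>
      rw [hm] at hβ
    · -- β < -a - b/Pmax, i.e. c * Pmax + b < 0
      have h1 : c * Pmax + b < 0 := by
        have : c < -b / Pmax := by rw [hc]; rw [neg_div] at *; linarith
        have := (mul_lt_mul_of_pos_right this hPmax)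
        rw [div_mul_cancel₀ _ (ne_of_gt hPmax)] at this
        linarith
      rw [hv, hpstar]
      split
      · exact h1
      · rename_i h
        push_neg at h
        nlinarith
    · have h1 : c * Pmin + b < 0 := by
        have : c < -b / Pmin := by rw [hc]; rw [neg_div] at *; linarith
        have := (mul_lt_mul_of_pos_right this hPmin)
        rw [div_mul_cancel₀ _ (ne_of_gt hPmin)] at this
        linarith
      rw [hv, hpstar]
      split
      · rename_i h; nlinarith
      · exact h1
  -- vstar is a lower bound
  have hlb : ∀ v ∈ {v : ℝ | ∃ p z : ℝ, (z = 0 ∨ z = 1) ∧ z * Pmin ≤ p ∧ p ≤ z * Pmax ∧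
      v = z * (a * p + b) + β * p}, vstar ≤ v := by
    rintro v ⟨p, z, hz | hz, h1, h2, rfl⟩
    · subst hz
      have : p = 0 := le_antisymm (by linarith) (by linarith)
      subst this
      simp only [zero_mul, mul_zero, add_zero, zero_add]
      linarith
    · subst hz
      rw [one_mul] at h1 h2 ⊢
      have key : c * pstar ≤ c * p := by
        rw [hpstar]
        split
        · rename_i h; exact mul_le_mul_of_nonpos_left h2 h
        · rename_i h; push_neg at h; exact mul_le_mul_of_nonneg_left h1 h.le
      rw [hv]
      nlinarith [key]
  have hmem : vstar ∈ {v : ℝ | ∃ p z : ℝ, (z = 0 ∨ z = 1) ∧ z * Pmin ≤ p ∧ p ≤ z * Pmax ∧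
      v = z * (a * p + b) + β * p} := by
    exact ⟨pstar, 1, Or.inr rfl, by rw [one_mul]; exact hps1, by rw [one_mul]; exact hps2,
      by rw [hv, hc]; ring⟩
  refine ⟨⟨vstar, ⟨hmem, hlb⟩, hvneg⟩, ?_⟩
  rintro p z (hz | hz) h1 h2 hleast
  · exfalso
    subst hz
    have : p = 0 := le_antisymm (by linarith) (by linarith)
    subst this
    have := hleast.2 hmem
    simp at this
    linarith
  · exact hz
end

section
/- If β > β⁰, then L(β) = 0 and the pair (p, z) = (0, 0) is the unique feasible pair of the individual-unit subproblem attaining the optimal value L(β); in particular every optimal pair has z = 0. -/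
lemma on_case_pos (a b β Pmin Pmax : ℝ) (hPmin : 0 < Pmin) (hP : Pmin ≤ Pmax)
    (h1 : -a - b / Pmax < β) (h2 : -a - b / Pmin < β)
    {p : ℝ} (hp1 : Pmin ≤ p) (hp2 : p ≤ Pmax) :
    0 < (a * p + b) + β * p := by
  have hPmax : 0 < Pmax := lt_of_lt_of_le hPmin hP
  have key : (a * p + b) + β * p = (a + β) * p + b := by ring
  rw [key]
  rcases le_or_gt 0 (a + β) with hc | hc
  · have hb : -b / Pmin < a + β := by linarith [neg_div Pmin b]
    have : -b < (a + β) * Pmin := by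
      have := (div_lt_iff₀ hPmin).mp hb
      linarith
    have hmono : (a + β) * Pmin ≤ (a + β) * p := by nlinarith
    linarith
  · have hb : -b / Pmax < a + β := by linarith [neg_div Pmax b]
    have : -b < (a + β) * Pmax := by
      have := (div_lt_iff₀ hPmax).mp hb
      linarith
    have hmono : (a + β) * Pmax ≤ (a + β) * p := by nlinarith
    linarith

/-- With `β⁰ = max{-a - b/P_max, -a - b/P_min}`, if `β > β⁰` then the
optimal value of the individual-unit subproblem is `L(β) = 0`, and `(p, z) = (0, 0)` is
the unique feasible pair attaining this optimal value; in particular every optimal pair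
has `z = 0`. -/
theorem iUC_off_above_beta0 (a b β Pmin Pmax : ℝ) (hPmin : 0 < Pmin)
    (hP : Pmin ≤ Pmax) (hβ : max (-a - b / Pmax) (-a - b / Pmin) < β) :
    IsLeast {v : ℝ | ∃ p z : ℝ, (z = 0 ∨ z = 1) ∧ z * Pmin ≤ p ∧ p ≤ z * Pmax ∧
        v = z * (a * p + b) + β * p} 0 ∧
    (∀ p z : ℝ, (z = 0 ∨ z = 1) → z * Pmin ≤ p → p ≤ z * Pmax →
      z * (a * p + b) + β * p = 0 → p = 0 ∧ z = 0) := by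
  have h1 : -a - b / Pmax < β := lt_of_le_of_lt (le_max_left _ _) hβ
  have h2 : -a - b / Pmin < β := lt_of_le_of_lt (le_max_right _ _) hβ
  constructor
  · constructor
    · exact ⟨0, 0, Or.inl rfl, by norm_num, by norm_num, by ring⟩
    · rintro v ⟨p, z, hz | hz, hzl, hzu, rfl⟩
      · subst hz
        have : p = 0 := le_antisymm (by linarith) (by linarith)
        subst this; norm_num
      · subst hz
        simp only [one_mul] at hzl hzu ⊢
        have := on_case_pos a b β Pmin Pmax hPmin hP h1 h2 hzl hzu
        linarith
  · rintro p z (hz | hz) hzl hzu heq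
    · subst hz
      exact ⟨le_antisymm (by linarith) (by linarith), rfl⟩
    · subst hz
      simp only [one_mul] at hzl hzu heq
      have := on_case_pos a b β Pmin Pmax hPmin hP h1 h2 hzl hzu
      linarith
end

section
/- For every dual vector λ = (λ_0, λ⁺, λ⁻), the dual function separates across units: Φ(λ) = Σ_i L_i(λ) + c(λ), and the infimum defining Φ(λ) is attained by some feasible (p, z). -/
noncomputable def dualBeta {I L : ℕ} (Γ : Fin L → Fin I → ℝ)
    (l0 : ℝ) (lp lm : Fin L → ℝ) (i : Fin I) : ℝ :=
  -l0 + ∑ l, (lp l - lm l) * Γ l i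

noncomputable def dualConst {L : ℕ} (F G : Fin L → ℝ) (D : ℝ)
    (l0 : ℝ) (lp lm : Fin L → ℝ) : ℝ :=
  l0 * D + ∑ l, (lp l * (-G l - F l) + lm l * (G l - F l))

noncomputable def unitDualVal (a b Pmin Pmax β : ℝ) : ℝ :=
  min (min ((a + β) * Pmax + b) ((a + β) * Pmin + b)) 0

lemma lagr_rewrite {I L : ℕ} (Γ : Fin L → Fin I → ℝ) (F G : Fin L → ℝ) (D l0 : ℝ)
    (lp lm : Fin L → ℝ) (p : Fin I → ℝ) :
    l0 * (D - ∑ i, p i)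
      + (∑ l, lp l * ((∑ i, Γ l i * p i) - G l - F l))
      - (∑ l, lm l * ((∑ i, Γ l i * p i) - G l + F l))
    = (∑ i, dualBeta Γ l0 lp lm i * p i) + dualConst F G D l0 lp lm := by
  simp only [dualBeta, dualConst, mul_sub, mul_add, add_mul, sub_mul, neg_mul,
    Finset.sum_add_distrib, Finset.sum_sub_distrib, Finset.mul_sum, Finset.sum_mul]
  have hc1 : ∑ x : Fin I, ∑ i : Fin L, lp i * Γ i x * p x
      = ∑ i : Fin L, ∑ x : Fin I, lp i * (Γ i x * p x) := by
    rw [Finset.sum_comm]; simp [mul_assoc]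
  have hc2 : ∑ x : Fin I, ∑ i : Fin L, lm i * Γ i x * p x
      = ∑ i : Fin L, ∑ x : Fin I, lm i * (Γ i x * p x) := by
    rw [Finset.sum_comm]; simp [mul_assoc]
  rw [hc1, hc2]; ring_nf; simp only [Finset.sum_neg_distrib]; ring

lemma unit_le (a b Pmin Pmax β z p : ℝ) (hz : z = 0 ∨ z = 1)
    (h1 : z * Pmin ≤ p) (h2 : p ≤ z * Pmax) :
    unitDualVal a b Pmin Pmax β ≤ z * (a * p + b) + β * p := by
  rcases hz with h | h
  · subst h
    simp only [zero_mul] at h1 h2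
    have hp : p = 0 := le_antisymm h2 h1
    subst hp
    have : (0 : ℝ) * (a * 0 + b) + β * 0 = 0 := by ring
    rw [this]
    exact min_le_right _ _
  · subst h
    rw [one_mul] at h1 h2
    have key : min ((a + β) * Pmax + b) ((a + β) * Pmin + b) ≤ (a + β) * p + b := by
      rcases le_total 0 (a + β) with hs | hs
      · exact le_trans (min_le_right _ _) (by nlinarith)
      · exact le_trans (min_le_left _ _) (by nlinarith)
    calc unitDualVal a b Pmin Pmax β
        ≤ min ((a + β) * Pmax + b) ((a + β) * Pmin + b) := min_le_left _ _
      _ ≤ (a + β) * p + b := key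
      _ = 1 * (a * p + b) + β * p := by ring

lemma unit_exists (a b Pmin Pmax β : ℝ) (hle : Pmin ≤ Pmax) :
    ∃ z p : ℝ, (z = 0 ∨ z = 1) ∧ z * Pmin ≤ p ∧ p ≤ z * Pmax ∧
      z * (a * p + b) + β * p = unitDualVal a b Pmin Pmax β := by
  rcases le_total ((a + β) * Pmax + b) ((a + β) * Pmin + b) with hm | hm
  · rcases le_total ((a + β) * Pmax + b) 0 with h0 | h0
    · exact ⟨1, Pmax, Or.inr rfl, by linarith [one_mul Pmin, one_mul Pmax], by nlinarith,
        by unfold unitDualVal; rw [min_eq_left hm, min_eq_left h0]; ring⟩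
    · exact ⟨0, 0, Or.inl rfl, by simp, by simp,
        by unfold unitDualVal; rw [min_eq_left hm, min_eq_right h0]; ring⟩
  · rcases le_total ((a + β) * Pmin + b) 0 with h0 | h0
    · exact ⟨1, Pmin, Or.inr rfl, by nlinarith, by nlinarith,
        by unfold unitDualVal; rw [min_eq_right hm, min_eq_left h0]; ring⟩
    · exact ⟨0, 0, Or.inl rfl, by simp, by simp,
        by unfold unitDualVal; rw [min_eq_right hm, min_eq_right h0]; ring⟩

/-- For every dual vector `λ = (λ_0, λ⁺, λ⁻)`, the dual function separates
across units: the infimum of the Lagrangian over feasible `(p, z)` is attained and equals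
`Σ_i L_i(λ) + c(λ)`. -/
theorem dual_function_separates (I L : ℕ) (a b Pmin Pmax : Fin I → ℝ)
    (hP : ∀ i, 0 < Pmin i ∧ Pmin i ≤ Pmax i)
    (Γ : Fin L → Fin I → ℝ) (F G : Fin L → ℝ) (D : ℝ)
    (l0 : ℝ) (lp lm : Fin L → ℝ) :
    IsLeast
      {v : ℝ | ∃ p z : Fin I → ℝ,
        (∀ i, (z i = 0 ∨ z i = 1) ∧ z i * Pmin i ≤ p i ∧ p i ≤ z i * Pmax i) ∧
        v = (∑ i, z i * (a i * p i + b i)) + l0 * (D - ∑ i, p i)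
            + (∑ l, lp l * ((∑ i, Γ l i * p i) - G l - F l))
            - (∑ l, lm l * ((∑ i, Γ l i * p i) - G l + F l))}
      ((∑ i, unitDualVal (a i) (b i) (Pmin i) (Pmax i) (dualBeta Γ l0 lp lm i))
        + dualConst F G D l0 lp lm) := by
  constructor
  · -- membership: attainment
    choose z p hz h1 h2 hval using fun i =>
      unit_exists (a i) (b i) (Pmin i) (Pmax i) (dualBeta Γ l0 lp lm i) (hP i).2
    refine ⟨p, z, fun i => ⟨hz i, h1 i, h2 i⟩, ?_⟩
    have h : (∑ i, z i * (a i * p i + b i)) + l0 * (D - ∑ i, p i)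
            + (∑ l, lp l * ((∑ i, Γ l i * p i) - G l - F l))
            - (∑ l, lm l * ((∑ i, Γ l i * p i) - G l + F l))
        = (∑ i, z i * (a i * p i + b i))
          + ((∑ i, dualBeta Γ l0 lp lm i * p i) + dualConst F G D l0 lp lm) := by
      rw [← lagr_rewrite Γ F G D l0 lp lm p]; ring
    rw [h, ← add_assoc, ← Finset.sum_add_distrib]
    congr 1
    exact Finset.sum_congr rfl fun i _ => (hval i).symm
  · -- lower bound
    rintro v ⟨p, z, hfeas, rfl⟩
    have h : (∑ i, z i * (a i * p i + b i)) + l0 * (D - ∑ i, p i)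
            + (∑ l, lp l * ((∑ i, Γ l i * p i) - G l - F l))
            - (∑ l, lm l * ((∑ i, Γ l i * p i) - G l + F l))
        = (∑ i, (z i * (a i * p i + b i) + dualBeta Γ l0 lp lm i * p i))
          + dualConst F G D l0 lp lm := by
      rw [Finset.sum_add_distrib]
      linarith [lagr_rewrite Γ F G D l0 lp lm p]
    rw [h]
    gcongr with i _
    exact unit_le _ _ _ _ _ _ _ (hfeas i).1 (hfeas i).2.1 (hfeas i).2.2
end
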